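/- Let c > 0 and consider the Riemannian surface (ℝ², g_c) where g_c = c (cosh u)^6 (du² + dv²). Then: (a) the metric g_c on ℝ² is complete; (b) the mean curvature α of the immersion below satisfies ∇α ≠ 0 at every point of ℝ² ∖ Ov, where Ov is the v-axis; (c) the map φ_c : (ℝ², g_c) → E³ given by φ_c(u,v) = (f(u) cos 3v, f(u) sin 3v, k(u)), with f(u) = (√c/3)(cosh u)³ and k(u) = (√c/2)((1/2) sinh 2u + u), is a biconservative isometric immersion into Euclidean 3-space E³. -/

import Mathlib

/- STATEMENT 2: Let c > 0 and consider the Riemannian surface (ℝ², g_c),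
g_c = c cosh⁶u (du² + dv²).  Then:
(a) the metric g_c on ℝ² is complete;
(b) the mean curvature α of the immersion below satisfies ∇α ≠ 0 at every point of
    ℝ² ∖ Ov (Ov the v-axis);
(c) the map φ_c(u,v) = (f(u) cos 3v, f(u) sin 3v, k(u)), with f(u) = (√c/3) cosh³u and
    k(u) = (√c/2)((1/2) sinh 2u + u), is a biconservative isometric immersion
    (ℝ², g_c) → E³.

Completeness is phrased through the Riemannian distance of g_c, defined as the infimum of
lengths of C¹ paths; since g_c is conformal to the flat metric, ∇α ≠ 0 is equivalent to the
coordinate differential of α being nonzero.  Biconservativity of a parametrized surface in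
E³ is `A(∇α) = -α ∇α`, written in coordinates as `II (I⁻¹ dα) = -α dα`. -/

noncomputable section
open scoped RealInnerProductSpace
open Function Set Real

abbrev Euc (m : ℕ) : Type := EuclideanSpace ℝ (Fin m)

/-- Building a point of `ℝ³` from coordinates. -/
def e3 (a b c : ℝ) : Euc 3 := (EuclideanSpace.equiv (Fin 3) ℝ).symm ![a, b, c]

/-! Classical fundamental forms of a parametrized surface `φ : ℝ² → ℝ³`. -/

/-- `∂φ/∂u`. -/
def du (φ : ℝ × ℝ → Euc 3) (p : ℝ × ℝ) : Euc 3 := fderiv ℝ φ p (1, 0)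

/-- `∂φ/∂v`. -/
def dv (φ : ℝ × ℝ → Euc 3) (p : ℝ × ℝ) : Euc 3 := fderiv ℝ φ p (0, 1)

/-- Cross product on `ℝ³`. -/
def cross (a b : Euc 3) : Euc 3 :=
  (EuclideanSpace.equiv (Fin 3) ℝ).symm
    ![a 1 * b 2 - a 2 * b 1, a 2 * b 0 - a 0 * b 2, a 0 * b 1 - a 1 * b 0]

/-- First fundamental form coefficient `E`. -/
def Ec (φ : ℝ × ℝ → Euc 3) (p : ℝ × ℝ) : ℝ := ⟪du φ p, du φ p⟫
/-- First fundamental form coefficient `F`. -/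
def Fc (φ : ℝ × ℝ → Euc 3) (p : ℝ × ℝ) : ℝ := ⟪du φ p, dv φ p⟫
/-- First fundamental form coefficient `G`. -/
def Gc (φ : ℝ × ℝ → Euc 3) (p : ℝ × ℝ) : ℝ := ⟪dv φ p, dv φ p⟫

/-- The (unnormalized) normal `φ_u × φ_v`. -/
def nrm (φ : ℝ × ℝ → Euc 3) (p : ℝ × ℝ) : Euc 3 := cross (du φ p) (dv φ p)

/-- Second fundamental form coefficient `L`. -/
def Lc (φ : ℝ × ℝ → Euc 3) (p : ℝ × ℝ) : ℝ := ⟪fderiv ℝ (du φ) p (1, 0), nrm φ p⟫ / ‖nrm φ p‖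
/-- Second fundamental form coefficient `M`. -/
def Mc (φ : ℝ × ℝ → Euc 3) (p : ℝ × ℝ) : ℝ := ⟪fderiv ℝ (du φ) p (0, 1), nrm φ p⟫ / ‖nrm φ p‖
/-- Second fundamental form coefficient `N`. -/
def Nc (φ : ℝ × ℝ → Euc 3) (p : ℝ × ℝ) : ℝ := ⟪fderiv ℝ (dv φ) p (0, 1), nrm φ p⟫ / ‖nrm φ p‖

/-- Mean curvature of the parametrized surface. -/
def meanCurv (φ : ℝ × ℝ → Euc 3) (p : ℝ × ℝ) : ℝ :=
  (Ec φ p * Nc φ p - 2 * Fc φ p * Mc φ p + Gc φ p * Lc φ p) /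
    (2 * (Ec φ p * Gc φ p - Fc φ p ^ 2))

/-- The first fundamental form as a matrix. -/
def Imat (φ : ℝ × ℝ → Euc 3) (p : ℝ × ℝ) : Matrix (Fin 2) (Fin 2) ℝ :=
  !![Ec φ p, Fc φ p; Fc φ p, Gc φ p]

/-- The second fundamental form as a matrix. -/
def IImat (φ : ℝ × ℝ → Euc 3) (p : ℝ × ℝ) : Matrix (Fin 2) (Fin 2) ℝ :=
  !![Lc φ p, Mc φ p; Mc φ p, Nc φ p]

/-- Coordinate differential of the mean curvature. -/
def dMean (φ : ℝ × ℝ → Euc 3) (p : ℝ × ℝ) : Fin 2 → ℝ :=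
  ![fderiv ℝ (meanCurv φ) p (1, 0), fderiv ℝ (meanCurv φ) p (0, 1)]

/-- Biconservativity `A(∇α) = -α ∇α` of a parametrized surface in `E³`, written in
coordinates: `II · (I⁻¹ dα) = -α dα`. -/
def BiconsAt (φ : ℝ × ℝ → Euc 3) (p : ℝ × ℝ) : Prop :=
  (IImat φ p).mulVec ((Imat φ p)⁻¹.mulVec (dMean φ p)) = (- meanCurv φ p) • dMean φ p

/-- Length of a path for the metric `g_c = c cosh⁶u (du² + dv²)`. -/
def gLen (c : ℝ) (γ : ℝ → ℝ × ℝ) : ℝ :=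
  ∫ t in (0:ℝ)..1,
    Real.sqrt (c * Real.cosh (γ t).1 ^ 6 * ((deriv γ t).1 ^ 2 + (deriv γ t).2 ^ 2))

/-- Riemannian distance of the metric `g_c`. -/
def gDist (c : ℝ) (p q : ℝ × ℝ) : ℝ :=
  sInf {L : ℝ | ∃ γ : ℝ → ℝ × ℝ, ContDiff ℝ 1 γ ∧ γ 0 = p ∧ γ 1 = q ∧ L = gLen c γ}

/-- The model immersion `φ_c`. -/
def phiModel (c : ℝ) (p : ℝ × ℝ) : Euc 3 :=
  e3 (Real.sqrt c / 3 * Real.cosh p.1 ^ 3 * Real.cos (3 * p.2))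
     (Real.sqrt c / 3 * Real.cosh p.1 ^ 3 * Real.sin (3 * p.2))
     (Real.sqrt c / 2 * (1 / 2 * Real.sinh (2 * p.1) + p.1))


lemma e3_inner (a b c a' b' c' : ℝ) :
    ⟪e3 a b c, e3 a' b' c'⟫ = a * a' + b * b' + c * c' := by
  simp [e3, PiLp.inner_apply, Fin.sum_univ_three]
  ring

lemma cross_e3 (a b c d e f : ℝ) :
    cross (e3 a b c) (e3 d e f) = e3 (b*f - c*e) (c*d - a*f) (a*e - b*d) := rfl

lemma norm_e3 (a b c : ℝ) : ‖e3 a b c‖ = Real.sqrt (a^2 + b^2 + c^2) := by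
  rw [norm_eq_sqrt_real_inner, e3_inner]
  ring_nf

/-- linear map (w₁,w₂) ↦ a w₁ + b w₂ -/
def lin1 (a b : ℝ) : ℝ × ℝ →L[ℝ] ℝ :=
  a • ContinuousLinearMap.fst ℝ ℝ ℝ + b • ContinuousLinearMap.snd ℝ ℝ ℝ

@[simp] lemma lin1_apply (a b : ℝ) (w : ℝ × ℝ) : lin1 a b w = a * w.1 + b * w.2 := by
  simp [lin1]

def e3L (A' B' C' : ℝ × ℝ →L[ℝ] ℝ) : ℝ × ℝ →L[ℝ] Euc 3 :=
  ((EuclideanSpace.equiv (Fin 3) ℝ).symm : (Fin 3 → ℝ) →L[ℝ] Euc 3).comp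
    (ContinuousLinearMap.pi ![A', B', C'])

@[simp] lemma e3L_apply (A' B' C' : ℝ × ℝ →L[ℝ] ℝ) (w : ℝ × ℝ) :
    e3L A' B' C' w = e3 (A' w) (B' w) (C' w) := by
  show (EuclideanSpace.equiv (Fin 3) ℝ).symm _ = (EuclideanSpace.equiv (Fin 3) ℝ).symm _
  congr 1
  funext i
  fin_cases i <;> rfl

lemma hasFDerivAt_fstcomp {g : ℝ → ℝ} {a : ℝ} {p : ℝ × ℝ} (hg : HasDerivAt g a p.1) :
    HasFDerivAt (fun q : ℝ × ℝ => g q.1) (lin1 a 0) p := by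
  have := hg.hasFDerivAt.comp p (hasFDerivAt_fst (p := p))
  refine this.congr_fderiv ?_
  ext w <;> simp

lemma hasFDerivAt_mul2 {g h : ℝ → ℝ} {a b : ℝ} {p : ℝ × ℝ}
    (hg : HasDerivAt g a p.1) (hh : HasDerivAt h b p.2) :
    HasFDerivAt (fun q : ℝ × ℝ => g q.1 * h q.2) (lin1 (a * h p.2) (g p.1 * b)) p := by
  have h1 : HasFDerivAt (fun q : ℝ × ℝ => g q.1) (lin1 a 0) p := hasFDerivAt_fstcomp hg
  have h2 : HasFDerivAt (fun q : ℝ × ℝ => h q.2) (lin1 0 b) p := by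
    have := hh.hasFDerivAt.comp p (hasFDerivAt_snd (p := p))
    refine this.congr_fderiv ?_
    ext w <;> simp
  have := h1.mul h2
  refine this.congr_fderiv ?_
  ext w <;> simp <;> ring

lemma hasFDerivAt_e3comp {A B C : ℝ × ℝ → ℝ} {A' B' C' : ℝ × ℝ →L[ℝ] ℝ} {p : ℝ × ℝ}
    (hA : HasFDerivAt A A' p) (hB : HasFDerivAt B B' p) (hC : HasFDerivAt C C' p) :
    HasFDerivAt (fun q => e3 (A q) (B q) (C q)) (e3L A' B' C') p := by
  have hpi : HasFDerivAt (fun q (i : Fin 3) => ![A, B, C] i q)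
      (ContinuousLinearMap.pi ![A', B', C']) p := by
    apply hasFDerivAt_pi.2
    intro i
    fin_cases i <;> simpa
  have hlin := ((EuclideanSpace.equiv (Fin 3) ℝ).symm :
      (Fin 3 → ℝ) →L[ℝ] Euc 3).hasFDerivAt (x := fun i => ![A, B, C] i p)
  have := hlin.comp p hpi
  refine HasFDerivAt.congr_of_eventuallyEq this (Filter.Eventually.of_forall fun q => ?_)
  show e3 (A q) (B q) (C q) = (EuclideanSpace.equiv (Fin 3) ℝ).symm _
  unfold e3
  congr 1
  funext i
  fin_cases i <;> rfl

/-! Explicit first derivatives of `phiModel`. -/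

def Phiu (c : ℝ) (p : ℝ × ℝ) : Euc 3 :=
  e3 (Real.sqrt c * Real.cosh p.1 ^ 2 * Real.sinh p.1 * Real.cos (3 * p.2))
     (Real.sqrt c * Real.cosh p.1 ^ 2 * Real.sinh p.1 * Real.sin (3 * p.2))
     (Real.sqrt c * Real.cosh p.1 ^ 2)

def Phiv (c : ℝ) (p : ℝ × ℝ) : Euc 3 :=
  e3 (Real.sqrt c * Real.cosh p.1 ^ 3 * -Real.sin (3 * p.2))
     (Real.sqrt c * Real.cosh p.1 ^ 3 * Real.cos (3 * p.2))
     0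

lemma e3_congr {a b c a' b' c' : ℝ} (h1 : a = a') (h2 : b = b') (h3 : c = c') :
    e3 a b c = e3 a' b' c' := by rw [h1, h2, h3]

lemma hasDerivAt_cos3 (v : ℝ) : HasDerivAt (fun v => Real.cos (3 * v)) (-Real.sin (3*v) * 3) v :=
  (Real.hasDerivAt_cos (3*v)).comp v (by simpa using (hasDerivAt_id v).const_mul 3)

lemma hasDerivAt_sin3 (v : ℝ) : HasDerivAt (fun v => Real.sin (3 * v)) (Real.cos (3*v) * 3) v :=
  (Real.hasDerivAt_sin (3*v)).comp v (by simpa using (hasDerivAt_id v).const_mul 3)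

lemma hasFDerivAt_phiModel (c : ℝ) (p : ℝ × ℝ) :
    HasFDerivAt (phiModel c)
      (e3L (lin1 (Real.sqrt c * Real.cosh p.1 ^ 2 * Real.sinh p.1 * Real.cos (3 * p.2))
                 (Real.sqrt c * Real.cosh p.1 ^ 3 * -Real.sin (3 * p.2)))
           (lin1 (Real.sqrt c * Real.cosh p.1 ^ 2 * Real.sinh p.1 * Real.sin (3 * p.2))
                 (Real.sqrt c * Real.cosh p.1 ^ 3 * Real.cos (3 * p.2)))
           (lin1 (Real.sqrt c * Real.cosh p.1 ^ 2) 0)) p := by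
  have hg : HasDerivAt (fun u => Real.sqrt c / 3 * Real.cosh u ^ 3)
      (Real.sqrt c * Real.cosh p.1 ^ 2 * Real.sinh p.1) p.1 := by
    have := ((Real.hasDerivAt_cosh p.1).pow 3).const_mul (Real.sqrt c / 3)
    refine this.congr_deriv (Eq.symm ?_); ring
  have hA : HasFDerivAt (fun q : ℝ × ℝ => Real.sqrt c / 3 * Real.cosh q.1 ^ 3 * Real.cos (3 * q.2))
      (lin1 (Real.sqrt c * Real.cosh p.1 ^ 2 * Real.sinh p.1 * Real.cos (3 * p.2))
            (Real.sqrt c * Real.cosh p.1 ^ 3 * -Real.sin (3 * p.2))) p := by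
    have := hasFDerivAt_mul2 (p := p) hg (hasDerivAt_cos3 p.2)
    convert this using 2 <;> ring
  have hB : HasFDerivAt (fun q : ℝ × ℝ => Real.sqrt c / 3 * Real.cosh q.1 ^ 3 * Real.sin (3 * q.2))
      (lin1 (Real.sqrt c * Real.cosh p.1 ^ 2 * Real.sinh p.1 * Real.sin (3 * p.2))
            (Real.sqrt c * Real.cosh p.1 ^ 3 * Real.cos (3 * p.2))) p := by
    have := hasFDerivAt_mul2 (p := p) hg (hasDerivAt_sin3 p.2)
    convert this using 2 <;> ring
  have hC : HasFDerivAt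
      (fun q : ℝ × ℝ => Real.sqrt c / 2 * (1 / 2 * Real.sinh (2 * q.1) + q.1))
      (lin1 (Real.sqrt c * Real.cosh p.1 ^ 2) 0) p := by
    have hk : HasDerivAt (fun u => Real.sqrt c / 2 * (1 / 2 * Real.sinh (2 * u) + u))
        (Real.sqrt c * Real.cosh p.1 ^ 2) p.1 := by
      have h1 : HasDerivAt (fun u : ℝ => Real.sinh (2 * u)) (Real.cosh (2*p.1) * 2) p.1 :=
        (Real.hasDerivAt_sinh (2*p.1)).comp p.1 (by simpa using (hasDerivAt_id p.1).const_mul 2)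
      have := ((h1.const_mul (1/2:ℝ)).add (hasDerivAt_id p.1)).const_mul (Real.sqrt c / 2)
      refine this.congr_deriv (Eq.symm ?_)
      rw [Real.cosh_two_mul]
      linear_combination (Real.sqrt c / 2) * (Real.cosh_sq_sub_sinh_sq p.1)
    exact hasFDerivAt_fstcomp hk
  exact hasFDerivAt_e3comp hA hB hC

lemma du_phiModel (c : ℝ) : du (phiModel c) = Phiu c := by
  funext p
  unfold du Phiu
  rw [(hasFDerivAt_phiModel c p).fderiv]
  simp

lemma dv_phiModel (c : ℝ) : dv (phiModel c) = Phiv c := by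
  funext p
  unfold dv Phiv
  rw [(hasFDerivAt_phiModel c p).fderiv]
  simp

/-! Second derivatives. -/

lemma hasFDerivAt_Phiu (c : ℝ) (p : ℝ × ℝ) :
    HasFDerivAt (Phiu c)
      (e3L (lin1 (Real.sqrt c * (2*Real.cosh p.1*Real.sinh p.1^2 + Real.cosh p.1^3) * Real.cos (3*p.2))
                 (-(3 * Real.sqrt c * Real.cosh p.1^2 * Real.sinh p.1 * Real.sin (3*p.2))))
           (lin1 (Real.sqrt c * (2*Real.cosh p.1*Real.sinh p.1^2 + Real.cosh p.1^3) * Real.sin (3*p.2))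
                 (3 * Real.sqrt c * Real.cosh p.1^2 * Real.sinh p.1 * Real.cos (3*p.2)))
           (lin1 (2 * Real.sqrt c * Real.cosh p.1 * Real.sinh p.1) 0)) p := by
  have hg : HasDerivAt (fun u => Real.sqrt c * Real.cosh u ^ 2 * Real.sinh u)
      (Real.sqrt c * (2*Real.cosh p.1*Real.sinh p.1^2 + Real.cosh p.1^3)) p.1 := by
    have := (((Real.hasDerivAt_cosh p.1).pow 2).const_mul (Real.sqrt c)).mul
      (Real.hasDerivAt_sinh p.1)
    refine this.congr_deriv (Eq.symm ?_); simp only [Pi.pow_apply]; ring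
  have hA := hasFDerivAt_mul2 (p := p) hg (hasDerivAt_cos3 p.2)
  have hB := hasFDerivAt_mul2 (p := p) hg (hasDerivAt_sin3 p.2)
  have hC : HasFDerivAt (fun q : ℝ × ℝ => Real.sqrt c * Real.cosh q.1 ^ 2)
      (lin1 (2 * Real.sqrt c * Real.cosh p.1 * Real.sinh p.1) 0) p := by
    have hk : HasDerivAt (fun u => Real.sqrt c * Real.cosh u ^ 2)
        (2 * Real.sqrt c * Real.cosh p.1 * Real.sinh p.1) p.1 := by
      have := ((Real.hasDerivAt_cosh p.1).pow 2).const_mul (Real.sqrt c)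
      refine this.congr_deriv (Eq.symm ?_); ring
    exact hasFDerivAt_fstcomp hk
  have h := hasFDerivAt_e3comp hA hB hC
  unfold Phiu
  convert h using 2 <;> ring

lemma hasFDerivAt_Phiv (c : ℝ) (p : ℝ × ℝ) :
    HasFDerivAt (Phiv c)
      (e3L (lin1 (3 * Real.sqrt c * Real.cosh p.1^2 * Real.sinh p.1 * -Real.sin (3*p.2))
                 (-(3 * Real.sqrt c * Real.cosh p.1^3 * Real.cos (3*p.2))))
           (lin1 (3 * Real.sqrt c * Real.cosh p.1^2 * Real.sinh p.1 * Real.cos (3*p.2))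
                 (-(3 * Real.sqrt c * Real.cosh p.1^3 * Real.sin (3*p.2))))
           (lin1 0 0)) p := by
  have hg : HasDerivAt (fun u => Real.sqrt c * Real.cosh u ^ 3)
      (3 * Real.sqrt c * Real.cosh p.1^2 * Real.sinh p.1) p.1 := by
    have := ((Real.hasDerivAt_cosh p.1).pow 3).const_mul (Real.sqrt c)
    refine this.congr_deriv (Eq.symm ?_); ring
  have hmsin : HasDerivAt (fun v => -Real.sin (3*v)) (-(Real.cos (3*p.2) * 3)) p.2 :=
    (hasDerivAt_sin3 p.2).neg
  have hA := hasFDerivAt_mul2 (p := p) hg hmsin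
  have hB := hasFDerivAt_mul2 (p := p) hg (hasDerivAt_cos3 p.2)
  have hC : HasFDerivAt (fun _ : ℝ × ℝ => (0:ℝ)) (lin1 0 0) p := by
    have : HasFDerivAt (fun _ : ℝ × ℝ => (0:ℝ)) (0 : ℝ × ℝ →L[ℝ] ℝ) p :=
      hasFDerivAt_const (0:ℝ) p
    convert this using 1
    ext w <;> simp
  have h := hasFDerivAt_e3comp hA hB hC
  unfold Phiv
  convert h using 2 <;> ring

/-! Isometry and fundamental forms. -/

lemma isometry_phi (c : ℝ) (hc : 0 < c) (p : ℝ × ℝ) (w w' : ℝ × ℝ) :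
    ⟪fderiv ℝ (phiModel c) p w, fderiv ℝ (phiModel c) p w'⟫ =
      c * Real.cosh p.1 ^ 6 * (w.1 * w'.1 + w.2 * w'.2) := by
  rw [(hasFDerivAt_phiModel c p).fderiv]
  simp only [e3L_apply, lin1_apply, e3_inner]
  have hs : Real.sqrt c ^ 2 = c := Real.sq_sqrt hc.le
  have hsc : Real.sin (3*p.2) ^ 2 + Real.cos (3*p.2) ^ 2 = 1 := Real.sin_sq_add_cos_sq _
  have hch : Real.cosh p.1 ^ 2 = Real.sinh p.1 ^ 2 + 1 := Real.cosh_sq p.1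
  linear_combination
    (Real.cosh p.1^4 * Real.sinh p.1^2 * (Real.cos (3*p.2))^2 * w.1 * w'.1
      + Real.cosh p.1^4 * Real.sinh p.1^2 * (Real.sin (3*p.2))^2 * w.1 * w'.1
      + Real.cosh p.1^6 * (Real.sin (3*p.2))^2 * w.2 * w'.2
      + Real.cosh p.1^6 * (Real.cos (3*p.2))^2 * w.2 * w'.2
      + Real.cosh p.1^4 * w.1 * w'.1) * hs
    + (c * Real.cosh p.1^4 * Real.sinh p.1^2 * w.1 * w'.1 + c * Real.cosh p.1^6 * w.2 * w'.2) * hsc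
    + (-(c * Real.cosh p.1^4 * w.1 * w'.1)) * hch

lemma Ec_phi (c : ℝ) (hc : 0 < c) (p : ℝ × ℝ) :
    Ec (phiModel c) p = c * Real.cosh p.1 ^ 6 := by
  have := isometry_phi c hc p (1,0) (1,0)
  simpa [Ec, du] using this

lemma Fc_phi (c : ℝ) (hc : 0 < c) (p : ℝ × ℝ) : Fc (phiModel c) p = 0 := by
  have := isometry_phi c hc p (1,0) (0,1)
  simpa [Fc, du, dv] using this

lemma Gc_phi (c : ℝ) (hc : 0 < c) (p : ℝ × ℝ) :
    Gc (phiModel c) p = c * Real.cosh p.1 ^ 6 := by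
  have := isometry_phi c hc p (0,1) (0,1)
  simpa [Gc, dv] using this

lemma nrm_phi (c : ℝ) (hc : 0 < c) (p : ℝ × ℝ) :
    nrm (phiModel c) p =
      e3 (-(c * Real.cosh p.1^5 * Real.cos (3*p.2))) (-(c * Real.cosh p.1^5 * Real.sin (3*p.2)))
         (c * Real.cosh p.1^5 * Real.sinh p.1) := by
  have hs : Real.sqrt c ^ 2 = c := Real.sq_sqrt hc.le
  have hsc : Real.sin (3*p.2) ^ 2 + Real.cos (3*p.2) ^ 2 = 1 := Real.sin_sq_add_cos_sq _
  unfold nrm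
  rw [du_phiModel, dv_phiModel]
  unfold Phiu Phiv
  rw [cross_e3]
  apply e3_congr
  · linear_combination (-(Real.cosh p.1^5 * Real.cos (3*p.2))) * hs
  · linear_combination (-(Real.cosh p.1^5 * Real.sin (3*p.2))) * hs
  · linear_combination (Real.cosh p.1^5 * Real.sinh p.1 * (Real.sin (3*p.2))^2
        + Real.cosh p.1^5 * Real.sinh p.1 * (Real.cos (3*p.2))^2) * hs
        + (c * Real.cosh p.1^5 * Real.sinh p.1) * hsc

lemma norm_nrm_phi (c : ℝ) (hc : 0 < c) (p : ℝ × ℝ) :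
    ‖nrm (phiModel c) p‖ = c * Real.cosh p.1 ^ 6 := by
  rw [nrm_phi c hc p, norm_e3]
  have hsc : Real.sin (3*p.2) ^ 2 + Real.cos (3*p.2) ^ 2 = 1 := Real.sin_sq_add_cos_sq _
  have hch : Real.cosh p.1 ^ 2 = Real.sinh p.1 ^ 2 + 1 := Real.cosh_sq p.1
  have h : (-(c * Real.cosh p.1^5 * Real.cos (3*p.2)))^2 + (-(c * Real.cosh p.1^5 * Real.sin (3*p.2)))^2
      + (c * Real.cosh p.1^5 * Real.sinh p.1)^2 = (c * Real.cosh p.1 ^ 6)^2 := by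
    linear_combination (c^2 * Real.cosh p.1^10) * hsc + (-(c^2 * Real.cosh p.1^10)) * hch
  rw [h, Real.sqrt_sq (by positivity)]

lemma Lc_phi (c : ℝ) (hc : 0 < c) (p : ℝ × ℝ) :
    Lc (phiModel c) p = -(Real.sqrt c * Real.cosh p.1 ^ 2) := by
  have hs : Real.sqrt c ^ 2 = c := Real.sq_sqrt hc.le
  have hsc : Real.sin (3*p.2) ^ 2 + Real.cos (3*p.2) ^ 2 = 1 := Real.sin_sq_add_cos_sq _
  have hch : Real.cosh p.1 ^ 2 = Real.sinh p.1 ^ 2 + 1 := Real.cosh_sq p.1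
  have hne : c * Real.cosh p.1 ^ 6 ≠ 0 := by positivity
  unfold Lc
  rw [du_phiModel, (hasFDerivAt_Phiu c p).fderiv, norm_nrm_phi c hc p, nrm_phi c hc p]
  simp only [e3L_apply, lin1_apply, e3_inner]
  rw [div_eq_iff hne]
  linear_combination
    (-(Real.sqrt c * c * (2*Real.cosh p.1^6*Real.sinh p.1^2 + Real.cosh p.1^8))) * hsc

lemma Mc_phi (c : ℝ) (hc : 0 < c) (p : ℝ × ℝ) : Mc (phiModel c) p = 0 := by
  unfold Mc
  rw [du_phiModel, (hasFDerivAt_Phiu c p).fderiv, norm_nrm_phi c hc p, nrm_phi c hc p]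
  simp only [e3L_apply, lin1_apply, e3_inner]
  have h0 : c * Real.cosh p.1 ^ 6 ≠ 0 := by positivity
  rw [div_eq_iff h0]
  ring

lemma Nc_phi (c : ℝ) (hc : 0 < c) (p : ℝ × ℝ) :
    Nc (phiModel c) p = 3 * Real.sqrt c * Real.cosh p.1 ^ 2 := by
  have hs : Real.sqrt c ^ 2 = c := Real.sq_sqrt hc.le
  have hsc : Real.sin (3*p.2) ^ 2 + Real.cos (3*p.2) ^ 2 = 1 := Real.sin_sq_add_cos_sq _
  have hne : c * Real.cosh p.1 ^ 6 ≠ 0 := by positivity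
  unfold Nc
  rw [dv_phiModel, (hasFDerivAt_Phiv c p).fderiv, norm_nrm_phi c hc p, nrm_phi c hc p]
  simp only [e3L_apply, lin1_apply, e3_inner]
  rw [div_eq_iff hne]
  linear_combination (3 * Real.sqrt c * c * Real.cosh p.1^8) * hsc

lemma meanCurv_phi (c : ℝ) (hc : 0 < c) (p : ℝ × ℝ) :
    meanCurv (phiModel c) p = (Real.sqrt c * Real.cosh p.1 ^ 4)⁻¹ := by
  have hs : Real.sqrt c ^ 2 = c := Real.sq_sqrt hc.le
  have hsqrt : (0:ℝ) < Real.sqrt c := Real.sqrt_pos.2 hc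
  unfold meanCurv
  rw [Ec_phi c hc p, Fc_phi c hc p, Gc_phi c hc p, Lc_phi c hc p, Mc_phi c hc p, Nc_phi c hc p]
  have h1 : Real.cosh p.1 ≠ 0 := (Real.cosh_pos p.1).ne'
  field_simp
  linear_combination (2 * Real.cosh p.1 ^ 12 * c) * hs

lemma meanCurv_eq (c : ℝ) (hc : 0 < c) :
    meanCurv (phiModel c) = fun p : ℝ × ℝ => (Real.sqrt c * Real.cosh p.1 ^ 4)⁻¹ :=
  funext (meanCurv_phi c hc)

lemma hasFDerivAt_meanCurv (c : ℝ) (hc : 0 < c) (p : ℝ × ℝ) :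
    HasFDerivAt (meanCurv (phiModel c))
      (lin1 (-(4 * Real.sinh p.1 / (Real.sqrt c * Real.cosh p.1 ^ 5))) 0) p := by
  have hsq : (0:ℝ) < Real.sqrt c := Real.sqrt_pos.2 hc
  have hch : (0:ℝ) < Real.cosh p.1 := Real.cosh_pos p.1
  rw [meanCurv_eq c hc]
  apply hasFDerivAt_fstcomp (g := fun u : ℝ => (Real.sqrt c * Real.cosh u ^ 4)⁻¹)
  have h1 := ((Real.hasDerivAt_cosh p.1).pow 4).const_mul (Real.sqrt c)
  have h2 := h1.inv (show Real.sqrt c * Real.cosh p.1 ^ 4 ≠ 0 by positivity)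
  refine h2.congr_deriv (Eq.symm ?_)
  field_simp
  simp only [Pi.pow_apply]; ring

lemma partb (c : ℝ) (hc : 0 < c) (p : ℝ × ℝ) (hp : p.1 ≠ 0) :
    fderiv ℝ (meanCurv (phiModel c)) p ≠ 0 := by
  rw [(hasFDerivAt_meanCurv c hc p).fderiv]
  intro h
  have h10 : (lin1 (-(4 * Real.sinh p.1 / (Real.sqrt c * Real.cosh p.1 ^ 5))) 0) (1, 0) = 0 := by
    rw [h]; rfl
  rw [lin1_apply] at h10
  simp only [mul_one, mul_zero, add_zero] at h10
  have hsh : Real.sinh p.1 ≠ 0 := Real.sinh_ne_zero.2 hp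
  have hden : Real.sqrt c * Real.cosh p.1 ^ 5 ≠ 0 := by
    have := Real.sqrt_pos.2 hc
    have := Real.cosh_pos p.1
    positivity
  have h4 := neg_eq_zero.1 h10
  rcases div_eq_zero_iff.1 h4 with h|h
  · exact hsh (by linarith)
  · exact hden h

lemma dMean_phi (c : ℝ) (hc : 0 < c) (p : ℝ × ℝ) :
    dMean (phiModel c) p = ![-(4 * Real.sinh p.1 / (Real.sqrt c * Real.cosh p.1 ^ 5)), 0] := by
  unfold dMean
  rw [(hasFDerivAt_meanCurv c hc p).fderiv]
  funext i
  fin_cases i <;> simp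

lemma bicons_phi (c : ℝ) (hc : 0 < c) (p : ℝ × ℝ) : BiconsAt (phiModel c) p := by
  have hch : (0:ℝ) < Real.cosh p.1 := Real.cosh_pos p.1
  have hsq : (0:ℝ) < Real.sqrt c := Real.sqrt_pos.2 hc
  have hs : Real.sqrt c ^ 2 = c := Real.sq_sqrt hc.le
  have hE : c * Real.cosh p.1 ^ 6 ≠ 0 := by positivity
  unfold BiconsAt
  have hI : Imat (phiModel c) p = !![c * Real.cosh p.1 ^ 6, 0; 0, c * Real.cosh p.1 ^ 6] := by
    unfold Imat
    rw [Ec_phi c hc p, Fc_phi c hc p, Gc_phi c hc p]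
  have hII : IImat (phiModel c) p =
      !![-(Real.sqrt c * Real.cosh p.1 ^ 2), 0; 0, 3 * Real.sqrt c * Real.cosh p.1 ^ 2] := by
    unfold IImat
    rw [Lc_phi c hc p, Mc_phi c hc p, Nc_phi c hc p]
  have hinv : (!![c * Real.cosh p.1 ^ 6, 0; 0, c * Real.cosh p.1 ^ 6] :
      Matrix (Fin 2) (Fin 2) ℝ)⁻¹ =
      !![(c * Real.cosh p.1 ^ 6)⁻¹, 0; 0, (c * Real.cosh p.1 ^ 6)⁻¹] := by
    rw [Matrix.inv_def, Matrix.adjugate_fin_two, Matrix.det_fin_two_of]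
    ext i j
    fin_cases i <;> fin_cases j <;>
      simp [Matrix.smul_apply] <;> field_simp <;> ring
  rw [hI, hII, hinv, dMean_phi c hc p, meanCurv_phi c hc p]
  funext i
  fin_cases i <;>
    simp [Matrix.mulVec, dotProduct, Fin.sum_univ_two] <;>
    field_simp
  linear_combination Real.sinh p.1 * hs

/-! Completeness of `g_c`. -/

lemma norm_sq_le (w : ℝ × ℝ) : ‖w‖ ^ 2 ≤ w.1 ^ 2 + w.2 ^ 2 := by
  have h1 : ‖w.1‖ ^ 2 = w.1 ^ 2 := by rw [Real.norm_eq_abs, sq_abs]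
  have h2 : ‖w.2‖ ^ 2 = w.2 ^ 2 := by rw [Real.norm_eq_abs, sq_abs]
  rw [Prod.norm_def]
  rcases le_total ‖w.1‖ ‖w.2‖ with h | h
  · rw [max_eq_right h]; nlinarith [sq_nonneg w.1]
  · rw [max_eq_left h]; nlinarith [sq_nonneg w.2]

lemma integrand_cont (c : ℝ) {γ : ℝ → ℝ × ℝ} (hγ : ContDiff ℝ 1 γ) :
    Continuous (fun t => Real.sqrt (c * Real.cosh (γ t).1 ^ 6 *
      ((deriv γ t).1 ^ 2 + (deriv γ t).2 ^ 2))) := by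
  have hdc : Continuous (deriv γ) := hγ.continuous_deriv le_rfl
  have hgc : Continuous γ := hγ.continuous
  exact (Real.continuous_sqrt.comp (by fun_prop))

lemma gLen_ge (c : ℝ) (hc : 0 < c) {γ : ℝ → ℝ × ℝ} (hγ : ContDiff ℝ 1 γ) :
    Real.sqrt c * ‖γ 1 - γ 0‖ ≤ gLen c γ := by
  have hdc : Continuous (deriv γ) := hγ.continuous_deriv le_rfl
  have hFTC : ∫ t in (0:ℝ)..1, deriv γ t = γ 1 - γ 0 :=
    intervalIntegral.integral_deriv_eq_sub
      (fun x _ => (hγ.differentiable one_ne_zero).differentiableAt)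
      (hdc.intervalIntegrable 0 1)
  have h1 : ‖γ 1 - γ 0‖ ≤ ∫ t in (0:ℝ)..1, ‖deriv γ t‖ := by
    rw [← hFTC]
    exact intervalIntegral.norm_integral_le_integral_norm (by norm_num)
  have h2 : Real.sqrt c * ‖γ 1 - γ 0‖ ≤ ∫ t in (0:ℝ)..1, Real.sqrt c * ‖deriv γ t‖ := by
    rw [intervalIntegral.integral_const_mul]
    exact mul_le_mul_of_nonneg_left h1 (Real.sqrt_nonneg c)
  refine h2.trans ?_
  apply intervalIntegral.integral_mono_on (by norm_num)
    ((continuous_const.mul hdc.norm).intervalIntegrable 0 1)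
    ((integrand_cont c hγ).intervalIntegrable 0 1)
  intro t _
  set w := deriv γ t
  have hx : Real.sqrt c * ‖w‖ = Real.sqrt (c * ‖w‖ ^ 2) := by
    rw [Real.sqrt_mul hc.le, Real.sqrt_sq (norm_nonneg _)]
  show Real.sqrt c * ‖w‖ ≤ _; rw [hx]
  apply Real.sqrt_le_sqrt
  have hX : (0:ℝ) ≤ w.1 ^ 2 + w.2 ^ 2 := by positivity
  have h3 : (1:ℝ) ≤ Real.cosh (γ t).1 ^ 6 := one_le_pow₀ (Real.one_le_cosh _)
  have h4 := norm_sq_le w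
  calc c * ‖w‖ ^ 2 ≤ c * (w.1 ^ 2 + w.2 ^ 2) := by nlinarith
    _ ≤ c * Real.cosh (γ t).1 ^ 6 * (w.1 ^ 2 + w.2 ^ 2) := by
        nlinarith [mul_nonneg (mul_nonneg hc.le (sub_nonneg.2 h3)) hX]

def seg (p q : ℝ × ℝ) : ℝ → ℝ × ℝ := fun t => p + t • (q - p)

lemma seg_contDiff (p q : ℝ × ℝ) : ContDiff ℝ 1 (seg p q) :=
  contDiff_const.add (contDiff_id.smul contDiff_const)

lemma seg_deriv (p q : ℝ × ℝ) (t : ℝ) : deriv (seg p q) t = q - p := by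
  have h : HasDerivAt (seg p q) (q - p) t := by
    have := ((hasDerivAt_id t).smul_const (q - p)).const_add p
    exact this.congr_deriv (one_smul _ _)
  exact h.deriv

lemma seg_zero (p q : ℝ × ℝ) : seg p q 0 = p := by simp [seg]
lemma seg_one (p q : ℝ × ℝ) : seg p q 1 = q := by simp [seg]

def gSet (c : ℝ) (p q : ℝ × ℝ) : Set ℝ :=
  {L : ℝ | ∃ γ : ℝ → ℝ × ℝ, ContDiff ℝ 1 γ ∧ γ 0 = p ∧ γ 1 = q ∧ L = gLen c γ}

lemma gSet_nonempty (c : ℝ) (p q : ℝ × ℝ) : (gSet c p q).Nonempty :=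
  ⟨gLen c (seg p q), seg p q, seg_contDiff p q, seg_zero p q, seg_one p q, rfl⟩

lemma gSet_lb (c : ℝ) (hc : 0 < c) (p q : ℝ × ℝ) :
    ∀ L ∈ gSet c p q, Real.sqrt c * ‖q - p‖ ≤ L := by
  rintro L ⟨γ, hγ, h0, h1, rfl⟩
  have := gLen_ge c hc hγ
  rwa [h0, h1] at this

lemma gSet_bdd (c : ℝ) (hc : 0 < c) (p q : ℝ × ℝ) : BddBelow (gSet c p q) :=
  ⟨Real.sqrt c * ‖q - p‖, fun L hL => gSet_lb c hc p q L hL⟩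

lemma gDist_ge (c : ℝ) (hc : 0 < c) (p q : ℝ × ℝ) :
    Real.sqrt c * ‖q - p‖ ≤ gDist c p q :=
  le_csInf (gSet_nonempty c p q) (gSet_lb c hc p q)

lemma gDist_nonneg (c : ℝ) (hc : 0 < c) (p q : ℝ × ℝ) : 0 ≤ gDist c p q :=
  le_trans (by positivity) (gDist_ge c hc p q)

lemma gDist_le_bound (c : ℝ) (hc : 0 < c) (p q : ℝ × ℝ) :
    gDist c p q ≤ Real.sqrt (c * Real.cosh (|p.1| + |q.1 - p.1|) ^ 6 *
      ((q.1 - p.1) ^ 2 + (q.2 - p.2) ^ 2)) := by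
  have hmem : gLen c (seg p q) ∈ gSet c p q :=
    ⟨seg p q, seg_contDiff p q, seg_zero p q, seg_one p q, rfl⟩
  refine le_trans (csInf_le (gSet_bdd c hc p q) hmem) ?_
  unfold gLen
  simp only [seg_deriv]
  have hint : ∀ t ∈ Icc (0:ℝ) 1,
      Real.sqrt (c * Real.cosh (seg p q t).1 ^ 6 * ((q - p).1 ^ 2 + (q - p).2 ^ 2)) ≤
      Real.sqrt (c * Real.cosh (|p.1| + |q.1 - p.1|) ^ 6 *
        ((q.1 - p.1) ^ 2 + (q.2 - p.2) ^ 2)) := by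
    intro t ht
    apply Real.sqrt_le_sqrt
    have hseg1 : (seg p q t).1 = p.1 + t * (q.1 - p.1) := by
      simp [seg]
    have habs : |(seg p q t).1| ≤ |p.1| + |q.1 - p.1| := by
      rw [hseg1]
      refine (abs_add_le _ _).trans ?_
      apply add_le_add le_rfl
      rw [abs_mul]
      calc |t| * |q.1 - p.1| ≤ 1 * |q.1 - p.1| := by
            apply mul_le_mul_of_nonneg_right _ (abs_nonneg _)
            rw [abs_of_nonneg ht.1]; exact ht.2
        _ = |q.1 - p.1| := one_mul _
    have hch : Real.cosh (seg p q t).1 ≤ Real.cosh (|p.1| + |q.1 - p.1|) := by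
      rw [Real.cosh_le_cosh,
        abs_of_nonneg (show (0:ℝ) ≤ |p.1| + |q.1 - p.1| by positivity)]
      exact habs
    have hX : (0:ℝ) ≤ (q - p).1 ^ 2 + (q - p).2 ^ 2 := by positivity
    have h6 : Real.cosh (seg p q t).1 ^ 6 ≤ Real.cosh (|p.1| + |q.1 - p.1|) ^ 6 := by
      gcongr <;> exact (Real.cosh_pos _).le
    have hqp1 : (q - p).1 = q.1 - p.1 := rfl
    have hqp2 : (q - p).2 = q.2 - p.2 := rfl
    rw [hqp1, hqp2] at hX ⊢
    have := mul_le_mul_of_nonneg_right (mul_le_mul_of_nonneg_left h6 hc.le) hX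
    linarith
  have hcont := integrand_cont c (seg_contDiff p q)
  simp only [seg_deriv] at hcont
  calc (∫ t in (0:ℝ)..1, Real.sqrt (c * Real.cosh (seg p q t).1 ^ 6 *
        ((q - p).1 ^ 2 + (q - p).2 ^ 2)))
      ≤ ∫ _t in (0:ℝ)..1, Real.sqrt (c * Real.cosh (|p.1| + |q.1 - p.1|) ^ 6 *
        ((q.1 - p.1) ^ 2 + (q.2 - p.2) ^ 2)) := by
        apply intervalIntegral.integral_mono_on (by norm_num)
          (hcont.intervalIntegrable 0 1)
          (intervalIntegrable_const) hint
    _ = Real.sqrt (c * Real.cosh (|p.1| + |q.1 - p.1|) ^ 6 *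
        ((q.1 - p.1) ^ 2 + (q.2 - p.2) ^ 2)) := by
        simp
theorem complete_biconservative_surface_in_E3 (c : ℝ) (hc : 0 < c) :
    -- (a) the metric `g_c` is complete
    (∀ x : ℕ → ℝ × ℝ,
      (∀ ε : ℝ, 0 < ε → ∃ N₀ : ℕ, ∀ k l : ℕ, N₀ ≤ k → N₀ ≤ l → gDist c (x k) (x l) < ε) →
      ∃ p : ℝ × ℝ, ∀ ε : ℝ, 0 < ε → ∃ N₀ : ℕ, ∀ k : ℕ, N₀ ≤ k → gDist c (x k) p < ε) ∧
    -- (b) `∇α ≠ 0` on `ℝ² ∖ Ov`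
    (∀ p : ℝ × ℝ, p.1 ≠ 0 → fderiv ℝ (meanCurv (phiModel c)) p ≠ 0) ∧
    -- (c) `φ_c` is an isometric immersion of `(ℝ², g_c)` which is biconservative
    ((∀ (p : ℝ × ℝ) (w w' : ℝ × ℝ),
        ⟪fderiv ℝ (phiModel c) p w, fderiv ℝ (phiModel c) p w'⟫ =
          c * Real.cosh p.1 ^ 6 * (w.1 * w'.1 + w.2 * w'.2)) ∧
      ∀ p : ℝ × ℝ, BiconsAt (phiModel c) p) := by
  refine ⟨?_, fun p hp => partb c hc p hp, isometry_phi c hc, bicons_phi c hc⟩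
  intro x hX
  have hsq : (0:ℝ) < Real.sqrt c := Real.sqrt_pos.2 hc
  have hcs : CauchySeq x := by
    rw [Metric.cauchySeq_iff]
    intro ε hε
    obtain ⟨N, hN⟩ := hX (Real.sqrt c * ε) (by positivity)
    refine ⟨N, fun k hk l hl => ?_⟩
    have h1 := gDist_ge c hc (x k) (x l)
    have h2 := hN k l hk hl
    rw [dist_eq_norm, norm_sub_rev]
    nlinarith
  obtain ⟨p, hp⟩ := cauchySeq_tendsto_of_complete hcs
  refine ⟨p, ?_⟩
  set F : ℝ × ℝ → ℝ := fun q => Real.sqrt (c * Real.cosh (|q.1| + |p.1 - q.1|) ^ 6 *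
    ((p.1 - q.1) ^ 2 + (p.2 - q.2) ^ 2)) with hF
  have hFcont : Continuous F := by
    apply Real.continuous_sqrt.comp
    fun_prop
  have hFp : F p = 0 := by simp [hF]
  have htend : Filter.Tendsto (fun k => F (x k)) Filter.atTop (nhds 0) := by
    have := (hFcont.continuousAt (x := p)).tendsto.comp hp
    rwa [hFp] at this
  intro ε hε
  obtain ⟨N, hN⟩ := Metric.tendsto_atTop.1 htend ε hε
  refine ⟨N, fun k hk => ?_⟩
  have h1 : gDist c (x k) p ≤ F (x k) := gDist_le_bound c hc (x k) p
  have h2 := hN k hk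
  rw [Real.dist_eq, sub_zero] at h2
  exact lt_of_le_of_lt h1 (lt_of_le_of_lt (le_abs_self _) h2)
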